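/- arXiv:2205.13869 — 3 statements merged into one kernel-verified Lean document; each statement's English description precedes it below -/
import Mathlib

section
/- Let f : ℝ^d → ℝ^d be C¹ such that g := id − f is a C¹ diffeomorphism of ℝ^d, and suppose that for every x ∈ ℝ^d the support digraph of the Jacobian matrix J_f(x) = Dg-complement (i.e., the matrix with entries ∂f_j/∂x_i evaluated at x) is acyclic. Let p_{Z_1},…,p_{Z_d} : ℝ → [0,∞) be probability densities and let ν be the measure on ℝ^d with density z ↦ ∏_{j=1}^d p_{Z_j}(z_j) with respect to Lebesgue measure. Then the pushforward of ν under g⁻¹ has density x ↦ ∏_{j=1}^d p_{Z_j}(x_j − f_j(x)) with respect to Lebesgue measure on ℝ^d. -/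
open MeasureTheory Matrix

/-- A relation `E` on `Fin d` (the edge relation of a digraph) is acyclic if there is no
closed directed walk of length at least one. -/
def DigraphAcyclic {d : ℕ} (E : Fin d → Fin d → Prop) : Prop :=
  ∀ (n : ℕ) (v : Fin (n + 2) → Fin d),
    (∀ i : Fin (n + 1), E (v i.castSucc) (v i.succ)) → v 0 ≠ v (Fin.last (n + 1))

/-- The Jacobian matrix of `f : ℝ^d → ℝ^d` at `x`, with entry `(i, j)` equal to
`∂f_j/∂x_i` at `x`. -/
noncomputable def jacobianMatrix {d : ℕ} (f : (Fin d → ℝ) → (Fin d → ℝ))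
    (x : Fin d → ℝ) : Matrix (Fin d) (Fin d) ℝ :=
  Matrix.of fun i j => fderiv ℝ f x (Pi.single i 1) j

lemma det_one_sub_of_acyclic {d : ℕ} (M : Matrix (Fin d) (Fin d) ℝ)
    (h : DigraphAcyclic fun i j => M i j ≠ 0) : (1 - M).det = 1 := by
  have hdiag : ∀ i, M i i = 0 := by
    intro i
    by_contra hMii
    exact h 0 (fun _ => i) (fun _ => hMii) rfl
  rw [Matrix.det_apply]
  rw [Finset.sum_eq_single (1 : Equiv.Perm (Fin d))]
  · simp [Matrix.one_apply, hdiag]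
  · intro σ _ hσ
    have hzero : ∏ i, (1 - M) (σ i) i = 0 := by
      by_contra hprod
      have hfac : ∀ i, (1 - M) (σ i) i ≠ 0 := by
        intro i hi
        exact hprod (Finset.prod_eq_zero (Finset.mem_univ i) hi)
      obtain ⟨i₀, hi₀⟩ : ∃ i, σ i ≠ i := by
        by_contra hall
        push_neg at hall
        exact hσ (Equiv.ext hall)
      have hkey : ∀ k : ℕ, M (σ ((σ ^ k) i₀)) ((σ ^ k) i₀) ≠ 0 := by
        intro k
        have hne : σ ((σ ^ k) i₀) ≠ (σ ^ k) i₀ := by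
          intro hfix
          apply hi₀
          have : (σ ^ k) (σ i₀) = (σ ^ k) i₀ := by
            rw [← Equiv.Perm.mul_apply, ← pow_succ, pow_succ', Equiv.Perm.mul_apply, hfix]
          exact (σ ^ k).injective this
        have := hfac ((σ ^ k) i₀)
        simpa [Matrix.sub_apply, Matrix.one_apply, hne] using this
      set m := orderOf σ with hm
      have hmpos : 0 < m := orderOf_pos σ
      obtain ⟨n, hn⟩ : ∃ n, m = n + 1 := ⟨m - 1, (Nat.succ_pred_eq_of_pos hmpos).symm⟩
      refine h n (fun t => (σ ^ (m - (t : ℕ))) i₀) ?_ ?_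
      · intro i
        have hle : (i : ℕ) + 1 ≤ m := by
          have := i.isLt
          omega
        have hcast : (i.castSucc : ℕ) = (i : ℕ) := rfl
        have hsucc : (i.succ : ℕ) = (i : ℕ) + 1 := rfl
        have hpow : (σ ^ (m - (i : ℕ))) i₀ = σ ((σ ^ (m - ((i : ℕ) + 1))) i₀) := by
          have : m - (i : ℕ) = (m - ((i : ℕ) + 1)) + 1 := by omega
          rw [this, pow_succ', Equiv.Perm.mul_apply]
        simp only [hcast, hsucc, hpow]
        exact hkey _
      · simp only [Fin.val_zero, Nat.sub_zero, Fin.val_last]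
        rw [hn]
        simp [pow_orderOf_eq_one σ, hn.symm, hm]
    rw [hzero, smul_zero]
  · intro h1
    exact absurd (Finset.mem_univ 1) h1

/-- Density factorization for additive noise models: if `g = id - f` is a C¹ diffeomorphism
whose Jacobian `J_f` has acyclic support digraph everywhere, and `ν` has density
`z ↦ ∏ j, pZ j (z j)` (a product of probability densities) with respect to Lebesgue measure,
then the pushforward of `ν` under `g⁻¹` has density `x ↦ ∏ j, pZ j (x j - f x j)`. -/
theorem map_withDensity_prod_of_acyclic_anm
    {d : ℕ} (f ginv : (Fin d → ℝ) → (Fin d → ℝ))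
    (hf : ContDiff ℝ 1 f) (hginv : ContDiff ℝ 1 ginv)
    (hli : Function.LeftInverse ginv fun x => x - f x)
    (hri : Function.RightInverse ginv fun x => x - f x)
    (hacyclic : ∀ x, DigraphAcyclic fun i j => jacobianMatrix f x i j ≠ 0)
    (pZ : Fin d → ℝ → ℝ) (hpZm : ∀ j, Measurable (pZ j))
    (hpZ0 : ∀ j t, 0 ≤ pZ j t) (hpZ1 : ∀ j, ∫ t, pZ j t = 1) :
    Measure.map ginv
        (volume.withDensity fun z => ENNReal.ofReal (∏ j, pZ j (z j))) =
      volume.withDensity fun x => ENNReal.ofReal (∏ j, pZ j (x j - f x j)) := by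
  set g : (Fin d → ℝ) → (Fin d → ℝ) := fun x => x - f x with hg
  have hfd : Differentiable ℝ f := hf.differentiable one_ne_zero
  have hgd : Differentiable ℝ g := fun x => (differentiable_id.sub hfd) x
  have hdet : ∀ x, (fderiv ℝ g x).det = 1 := by
    intro x
    have hderiv : fderiv ℝ g x = ContinuousLinearMap.id ℝ (Fin d → ℝ) - fderiv ℝ f x := by
      rw [hg]
      rw [fderiv_fun_sub differentiableAt_fun_id (hfd x)]
      simp [fderiv_id']
    have : (fderiv ℝ g x).det = LinearMap.det ((fderiv ℝ g x) : (Fin d → ℝ) →ₗ[ℝ] (Fin d → ℝ)) := rfl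
    rw [this, ← LinearMap.det_toMatrix' ]
    have hMat : LinearMap.toMatrix' ((fderiv ℝ g x) : (Fin d → ℝ) →ₗ[ℝ] (Fin d → ℝ)) =
        (1 - jacobianMatrix f x)ᵀ := by
      ext i j
      rw [LinearMap.toMatrix'_apply]
      have hsingle : (fun j' => if j' = j then (1:ℝ) else 0) = Pi.single j 1 := by
        ext j'
        simp [Pi.single_apply, eq_comm]
      rw [hderiv]
      simp [Matrix.transpose_apply, Matrix.sub_apply, Matrix.one_apply, jacobianMatrix,
        Pi.single_apply, eq_comm]
    rw [hMat, Matrix.det_transpose]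
    exact det_one_sub_of_acyclic _ (hacyclic x)
  have hginj : Function.Injective g := hli.injective
  have hρm : Measurable fun z : Fin d → ℝ => ENNReal.ofReal (∏ j, pZ j (z j)) := by
    apply ENNReal.measurable_ofReal.comp
    exact Finset.measurable_prod _ fun j _ => (hpZm j).comp (measurable_pi_apply j)
  have hρgm : Measurable fun x : Fin d → ℝ => ENNReal.ofReal (∏ j, pZ j (x j - f x j)) := by
    have hgm : Measurable g := hgd.continuous.measurable
    have := hρm.comp hgm
    exact this
  have hginvm : Measurable ginv := hginv.continuous.measurable
  ext s hs
  rw [Measure.map_apply hginvm hs, withDensity_apply _ (hginvm hs), withDensity_apply _ hs]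
  have hpre : ginv ⁻¹' s = g '' s := by
    ext z
    constructor
    · intro hz
      exact ⟨ginv z, hz, hri z⟩
    · rintro ⟨x, hx, rfl⟩
      show ginv (g x) ∈ s
      rwa [hli x]
  rw [hpre]
  rw [lintegral_image_eq_lintegral_abs_det_fderiv_mul volume hs
    (fun x _ => (hgd x).hasFDerivAt.hasFDerivWithinAt) (hginj.injOn) _]
  apply setLIntegral_congr_fun hs
  intro x hx
  beta_reduce
  rw [hdet x]
  simp [hg]
end

section
/- Let μ be a σ-finite measure on a measurable space, Θ a type of parameters, and for each θ ∈ Θ let p_θ be a measurable function with values in (0, ∞) such that L(θ) := ∫ p_θ dμ ∈ (0, ∞); set r_θ := p_θ / L(θ). Let PEN : Θ → ℝ and λ ≥ 0, and define Q(θ, θ') := ∫ r_{θ'} log p_θ dμ − λ·PEN(θ). Fix θ¹, θ² ∈ Θ and assume r_{θ¹}·log p_{θ¹}, r_{θ¹}·log p_{θ²}, r_{θ¹}·log r_{θ¹}, and r_{θ¹}·log r_{θ²} are μ-integrable. If Q(θ², θ¹) ≥ Q(θ¹, θ¹), then log L(θ²) − λ·PEN(θ²) ≥ log L(θ¹) −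 λ·PEN(θ¹). -/
open MeasureTheory

/-- Monotonicity of the penalized EM step: if the penalized expected complete-data
log-likelihood `Q(θ, θ') = ∫ r_{θ'} log p_θ dμ - λ PEN θ` does not decrease when moving from
`θ1` to `θ2` (with `r_θ := p_θ / ∫ p_θ dμ`), then neither does the penalized observed-data
log-likelihood `log (∫ p_θ dμ) - λ PEN θ`. -/
theorem penalized_em_monotone
    {α : Type*} [MeasurableSpace α] (μ : Measure α) [SigmaFinite μ]
    {Θ : Type*} (p : Θ → α → ℝ)
    (hm : ∀ θ, Measurable (p θ)) (hpos : ∀ θ x, 0 < p θ x)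
    (hi : ∀ θ, Integrable (p θ) μ) (hL : ∀ θ, 0 < ∫ x, p θ x ∂μ)
    (PEN : Θ → ℝ) (lam : ℝ) (hlam : 0 ≤ lam)
    (θ1 θ2 : Θ)
    (hint₁₁ : Integrable
      (fun x => (p θ1 x / ∫ y, p θ1 y ∂μ) * Real.log (p θ1 x)) μ)
    (hint₁₂ : Integrable
      (fun x => (p θ1 x / ∫ y, p θ1 y ∂μ) * Real.log (p θ2 x)) μ)
    (hint₁r₁ : Integrable
      (fun x => (p θ1 x / ∫ y, p θ1 y ∂μ) *
        Real.log (p θ1 x / ∫ y, p θ1 y ∂μ)) μ)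
    (hint₁r₂ : Integrable
      (fun x => (p θ1 x / ∫ y, p θ1 y ∂μ) *
        Real.log (p θ2 x / ∫ y, p θ2 y ∂μ)) μ)
    (hQ : (∫ x, (p θ1 x / ∫ y, p θ1 y ∂μ) * Real.log (p θ1 x) ∂μ) - lam * PEN θ1 ≤
      (∫ x, (p θ1 x / ∫ y, p θ1 y ∂μ) * Real.log (p θ2 x) ∂μ) - lam * PEN θ2) :
    Real.log (∫ x, p θ1 x ∂μ) - lam * PEN θ1 ≤
      Real.log (∫ x, p θ2 x ∂μ) - lam * PEN θ2 := by
  set L1 : ℝ := ∫ x, p θ1 x ∂μ with hL1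
  set L2 : ℝ := ∫ x, p θ2 x ∂μ with hL2
  have hL1pos : 0 < L1 := hL θ1
  have hL2pos : 0 < L2 := hL θ2
  set r1 : α → ℝ := fun x => p θ1 x / L1 with hr1
  set r2 : α → ℝ := fun x => p θ2 x / L2 with hr2
  have hr1pos : ∀ x, 0 < r1 x := fun x => div_pos (hpos θ1 x) hL1pos
  have hr2pos : ∀ x, 0 < r2 x := fun x => div_pos (hpos θ2 x) hL2pos
  have hir1 : Integrable r1 μ := (hi θ1).div_const L1
  have hir2 : Integrable r2 μ := (hi θ2).div_const L2
  have hint_r1 : ∫ x, r1 x ∂μ = 1 := by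
    simp only [hr1, integral_div]
    exact div_self hL1pos.ne'
  -- decomposition: ∫ r1 log p_θ = ∫ r1 log r_θ + log L_θ
  have hdecomp : ∀ θ, (fun x => r1 x * Real.log (p θ x / ∫ y, p θ y ∂μ)) =
      fun x => r1 x * Real.log (p θ x) - r1 x * Real.log (∫ y, p θ y ∂μ) := by
    intro θ
    funext x
    rw [Real.log_div (hpos θ x).ne' (hL θ).ne']
    ring
  have key : ∀ θ, Integrable (fun x => r1 x * Real.log (p θ x)) μ →
      ∫ x, r1 x * Real.log (p θ x / ∫ y, p θ y ∂μ) ∂μ =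
        (∫ x, r1 x * Real.log (p θ x) ∂μ) - Real.log (∫ y, p θ y ∂μ) := by
    intro θ hI
    rw [hdecomp θ, integral_sub hI (hir1.mul_const _), integral_mul_const, hint_r1, one_mul]
  have key1 := key θ1 hint₁₁
  have key2 := key θ2 hint₁₂
  -- Gibbs inequality: ∫ r1 log r2 ≤ ∫ r1 log r1
  have gibbs : ∫ x, r1 x * Real.log (r2 x) ∂μ ≤ ∫ x, r1 x * Real.log (r1 x) ∂μ := by
    have hptwise : ∀ x, r1 x * Real.log (r2 x) - r1 x * Real.log (r1 x) ≤ r2 x - r1 x := by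
      intro x
      have h1 := hr1pos x
      have h2 := hr2pos x
      have hlog : Real.log (r2 x / r1 x) ≤ r2 x / r1 x - 1 :=
        Real.log_le_sub_one_of_pos (div_pos h2 h1)
      have := mul_le_mul_of_nonneg_left hlog h1.le
      rw [Real.log_div h2.ne' h1.ne'] at this
      calc r1 x * Real.log (r2 x) - r1 x * Real.log (r1 x)
          = r1 x * (Real.log (r2 x) - Real.log (r1 x)) := by ring
        _ ≤ r1 x * (r2 x / r1 x - 1) := this
        _ = r2 x - r1 x := by field_simp
    have hintL : Integrable (fun x => r1 x * Real.log (r2 x) - r1 x * Real.log (r1 x)) μ :=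
      hint₁r₂.sub hint₁r₁
    have hintR : Integrable (fun x => r2 x - r1 x) μ := hir2.sub hir1
    have := integral_mono hintL hintR hptwise
    rw [integral_sub hint₁r₂ hint₁r₁, integral_sub hir2 hir1, hint_r1] at this
    have hint_r2 : ∫ x, r2 x ∂μ = 1 := by
      simp only [hr2, integral_div]
      exact div_self hL2pos.ne'
    rw [hint_r2] at this
    linarith
  rw [key1, key2] at *
  linarith [gibbs]
end

section
/- Let A ∈ ℝ^{d×d} have all entries nonnegative. Then Tr(exp(A)) ≥ d, and Tr(exp(A)) = d if and only if the directed graph on {1,…,d} with an edge i→j whenever A_ij > 0 is acyclic, where exp denotes the matrix exponential. -/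
open Matrix Nat

lemma aux_pow_entry_nonneg {d : ℕ} (A : Matrix (Fin d) (Fin d) ℝ)
    (hA : ∀ i j, 0 ≤ A i j) : ∀ (n : ℕ) (i j : Fin d), 0 ≤ (A ^ n) i j := by
  intro n
  induction n with
  | zero =>
    intro i j
    simp only [pow_zero, Matrix.one_apply]
    split <;> norm_num
  | succ n ih =>
    intro i j
    rw [pow_succ, Matrix.mul_apply]
    exact Finset.sum_nonneg fun k _ => mul_nonneg (ih i k) (hA k j)

lemma aux_exists_walk {d : ℕ} (A : Matrix (Fin d) (Fin d) ℝ)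
    (hA : ∀ i j, 0 ≤ A i j) :
    ∀ (n : ℕ) (i j : Fin d), 0 < (A ^ (n + 1)) i j →
      ∃ v : ℕ → Fin d, v 0 = i ∧ v (n + 1) = j ∧ ∀ k < n + 1, 0 < A (v k) (v (k + 1)) := by
  intro n
  induction n with
  | zero =>
    intro i j h
    rw [pow_one] at h
    refine ⟨fun k => if k = 0 then i else j, by simp, by simp, ?_⟩
    intro k hk
    interval_cases k
    simpa using h
  | succ n ih =>
    intro i j h
    rw [pow_succ, Matrix.mul_apply] at h
    have : ∃ k, 0 < (A ^ (n + 1)) i k * A k j := by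
      by_contra hc
      push_neg at hc
      have : ∀ k ∈ Finset.univ, (A ^ (n + 1)) i k * A k j = 0 := fun k _ =>
        le_antisymm (hc k) (mul_nonneg (aux_pow_entry_nonneg A hA _ i k) (hA k j))
      rw [Finset.sum_eq_zero this] at h
      exact lt_irrefl 0 h
    obtain ⟨k, hk⟩ := this
    have h1 : 0 < (A ^ (n + 1)) i k :=
      lt_of_le_of_ne (aux_pow_entry_nonneg A hA _ i k) (by
        intro heq
        rw [← heq, zero_mul] at hk
        exact lt_irrefl 0 hk)
    have h2 : 0 < A k j := by
      rcases mul_pos_iff.mp hk with ⟨_, h⟩ | ⟨h, _⟩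
      · exact h
      · exact ((not_lt.mpr (aux_pow_entry_nonneg A hA _ i k)) h).elim
    obtain ⟨v, hv0, hvn, hve⟩ := ih i k h1
    refine ⟨fun m => if m ≤ n + 1 then v m else j, by simp [hv0], by simp, ?_⟩
    intro m hm
    by_cases hm' : m < n + 1
    · have : m ≤ n + 1 := le_of_lt hm'
      have : m + 1 ≤ n + 1 := hm'
      simp only [if_pos (le_of_lt hm'), if_pos this]
      exact hve m hm'
    · have hm2 : m = n + 1 := by omega
      subst hm2
      simp only [le_refl, if_pos, if_neg (by omega : ¬ (n + 1 + 1 ≤ n + 1))]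
      rw [hvn]
      exact h2

lemma aux_pow_pos_of_walk {d : ℕ} (A : Matrix (Fin d) (Fin d) ℝ)
    (hA : ∀ i j, 0 ≤ A i j) :
    ∀ (n : ℕ) (v : ℕ → Fin d), (∀ k < n + 1, 0 < A (v k) (v (k + 1))) →
      0 < (A ^ (n + 1)) (v 0) (v (n + 1)) := by
  intro n
  induction n with
  | zero =>
    intro v hv
    rw [pow_one]
    exact hv 0 (by omega)
  | succ n ih =>
    intro v hv
    rw [pow_succ, Matrix.mul_apply]
    have hpos : 0 < (A ^ (n + 1)) (v 0) (v (n + 1)) * A (v (n + 1)) (v (n + 2)) :=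
      mul_pos (ih v fun k hk => hv k (by omega)) (hv (n + 1) (by omega))
    refine Finset.sum_pos' (fun k _ => mul_nonneg (aux_pow_entry_nonneg A hA _ _ _) (hA _ _))
      ⟨v (n + 1), Finset.mem_univ _, hpos⟩

/-- For a matrix `A` with nonnegative entries, `Tr (exp A) ≥ d`, with equality iff the
digraph with an edge `i → j` whenever `A i j > 0` is acyclic. -/
theorem trace_exp_ge_card_iff_acyclic
    {d : ℕ} (hd : 1 ≤ d) (A : Matrix (Fin d) (Fin d) ℝ)
    (hA : ∀ i j, 0 ≤ A i j) :
    (d : ℝ) ≤ (NormedSpace.exp A).trace ∧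
      ((NormedSpace.exp A).trace = d ↔ DigraphAcyclic fun i j => 0 < A i j) := by
  letI : SeminormedRing (Matrix (Fin d) (Fin d) ℝ) := Matrix.linftyOpSemiNormedRing
  letI : NormedRing (Matrix (Fin d) (Fin d) ℝ) := Matrix.linftyOpNormedRing
  letI : NormedAlgebra ℝ (Matrix (Fin d) (Fin d) ℝ) := Matrix.linftyOpNormedAlgebra
  have hsum : Summable fun n : ℕ => (n !⁻¹ : ℝ) • A ^ n :=
    NormedSpace.expSeries_summable' (𝕂 := ℝ) A
  set T : Matrix (Fin d) (Fin d) ℝ →L[ℝ] ℝ :=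
    LinearMap.toContinuousLinearMap (Matrix.traceLinearMap (Fin d) ℝ ℝ) with hT
  have hTapp : ∀ M : Matrix (Fin d) (Fin d) ℝ, T M = M.trace := fun M => rfl
  set g : ℕ → ℝ := fun n => (n !⁻¹ : ℝ) * (A ^ n).trace with hg
  have htr : (NormedSpace.exp A).trace = ∑' n, g n := by
    rw [NormedSpace.exp_eq_tsum ℝ, ← hTapp, T.map_tsum hsum]
    congr 1
    funext n
    rw [hTapp, Matrix.trace_smul, smul_eq_mul]
  have hgsum : Summable g := by
    have := (T.summable hsum)
    simpa [hTapp, Matrix.trace_smul, smul_eq_mul, Function.comp] using this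
  have hgnn : ∀ n, 0 ≤ g n := fun n =>
    mul_nonneg (by positivity)
      (Finset.sum_nonneg fun i _ => aux_pow_entry_nonneg A hA n i i)
  have hg0 : g 0 = d := by
    simp [hg, Matrix.trace_one]
  -- key equivalence: zero traces of positive powers ↔ acyclic
  have hkey : (∀ n : ℕ, (A ^ (n + 1)).trace = 0) ↔ DigraphAcyclic fun i j => 0 < A i j := by
    constructor
    · intro h0 n v hv hvl
      have hwalk : ∀ k < n + 1, 0 < A ((fun m => v ⟨min m (n + 1), by omega⟩) k)
          ((fun m => v ⟨min m (n + 1), by omega⟩) (k + 1)) := by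
        intro k hk
        have h1 : (⟨min k (n + 1), by omega⟩ : Fin (n + 2)) = (⟨k, by omega⟩ : Fin (n + 1)).castSucc := by
          ext; simp [Fin.castSucc]; omega
        have h2 : (⟨min (k + 1) (n + 1), by omega⟩ : Fin (n + 2)) = (⟨k, by omega⟩ : Fin (n + 1)).succ := by
          ext; simp [Fin.succ]; omega
        simp only [h1, h2]
        exact hv _
      have hpos := aux_pow_pos_of_walk A hA n _ hwalk
      have e0 : (⟨min 0 (n + 1), by omega⟩ : Fin (n + 2)) = 0 := by ext; simp
      have el : (⟨min (n + 1) (n + 1), by omega⟩ : Fin (n + 2)) = Fin.last (n + 1) := by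
        ext; simp [Fin.last]
      rw [e0, el, hvl] at hpos
      have htrpos : 0 < (A ^ (n + 1)).trace :=
        Finset.sum_pos' (fun i _ => aux_pow_entry_nonneg A hA _ i i)
          ⟨v (Fin.last (n + 1)), Finset.mem_univ _, hpos⟩
      rw [h0 n] at htrpos
      exact lt_irrefl 0 htrpos
    · intro hac n
      have hdiag : ∀ i, (A ^ (n + 1)) i i = 0 := by
        intro i
        by_contra hne
        have hpos : 0 < (A ^ (n + 1)) i i :=
          lt_of_le_of_ne (aux_pow_entry_nonneg A hA _ i i) (Ne.symm hne)
        obtain ⟨w, hw0, hwn, hwe⟩ := aux_exists_walk A hA n i i hpos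
        have := hac n (fun k => w k.val) (fun k => by
          have h1 : (k.castSucc : Fin (n + 2)).val = k.val := rfl
          have h2 : (k.succ : Fin (n + 2)).val = k.val + 1 := rfl
          simp only [h1, h2]
          exact hwe k.val k.isLt)
        apply this
        show w ((0 : Fin (n + 2)) : ℕ) = w ((Fin.last (n + 1) : Fin (n + 2)) : ℕ)
        simp only [Fin.val_zero, Fin.val_last]
        rw [hw0, hwn]
      exact Finset.sum_eq_zero fun i _ => hdiag i
  -- tsum decomposition
  have hsplit : ∑' n, g n = g 0 + ∑' n, g (n + 1) := Summable.tsum_eq_zero_add hgsum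
  have htailsum : Summable fun n => g (n + 1) := by
    exact (summable_nat_add_iff 1).mpr hgsum
  have htailnn : 0 ≤ ∑' n, g (n + 1) := tsum_nonneg fun n => hgnn (n + 1)
  constructor
  · rw [htr, hsplit, hg0]
    linarith
  · rw [htr, hsplit, hg0]
    rw [← hkey]
    constructor
    · intro heq n
      have hS : ∑' n, g (n + 1) = 0 := by linarith
      have hle : g (n + 1) ≤ 0 := hS ▸ Summable.le_tsum htailsum n fun j _ => hgnn (j + 1)
      have : g (n + 1) = 0 := le_antisymm hle (hgnn (n + 1))
      have hfac : (0 : ℝ) < ((n + 1)! : ℝ)⁻¹ := by positivity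
      rw [hg] at this
      simp only at this
      rcases mul_eq_zero.mp this with h | h
      · exact absurd h (ne_of_gt hfac)
      · exact h
    · intro h0
      have : ∀ n, g (n + 1) = 0 := fun n => by
        rw [hg]; simp only [h0 n, mul_zero]
      have hz : (fun n => g (n + 1)) = fun _ => (0 : ℝ) := funext this
      rw [hz, tsum_zero, add_zero]
end
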